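/- For the TRIP-Stern sequence for (e,12,e), the level sums are given in closed form by S(n) = 2ⁿ + 2·3ⁿ for all n ≥ 0 (equivalently, S satisfies S(n) = 5·S(n−1) − 6·S(n−2)). -/

import Mathlib

/-- `f₀(a,b,c) = (c,b,a+c)` for the triplet `(e,12,e)`. -/
def f0 (p : ℤ × ℤ × ℤ) : ℤ × ℤ × ℤ := (p.2.2, p.2.1, p.1 + p.2.2)

/-- `f₁(a,b,c) = (a,b,a+c)` for the triplet `(e,12,e)`. -/
def f1 (p : ℤ × ℤ × ℤ) : ℤ × ℤ × ℤ := (p.1, p.2.1, p.1 + p.2.2)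

/-- One step of the TRIP-Stern tree: apply `f₁` on a `true` and `f₀` on a `false`. -/
def step (p : ℤ × ℤ × ℤ) (i : Bool) : ℤ × ℤ × ℤ := if i then f1 p else f0 p

/-- `Δ(v) = f_{iₙ}(⋯ f_{i₁}(1,1,1) ⋯)`, applying `f_{i₁}` first. -/
def delta (v : List Bool) : ℤ × ℤ × ℤ := v.foldl step (1, 1, 1)

/-- `S n` is the sum of all three coordinates of all `2ⁿ` level-`n` triples. -/
def S (n : ℕ) : ℤ :=
  ∑ v : Fin n → Bool,
    ((delta (List.ofFn v)).1 + (delta (List.ofFn v)).2.1 + (delta (List.ofFn v)).2.2)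

/-!
Starting from `(a, b, c)`, each of `f₀, f₁` keeps the middle entry, while the two children have
`a + c` equal to `a + 2c` and `2a + c`, which add up to `3 (a + c)`. Hence summing over all words
of length `n`, the middle entries contribute `2ⁿ b` and the outer ones `3ⁿ (a + c)`.
-/

theorem Fintype.sum_ofFn_succ {α M : Type*} [Fintype α] [AddCommMonoid M] (n : ℕ)
    (g : List α → M) :
    ∑ v : Fin (n + 1) → α, g (List.ofFn v) = ∑ a : α, ∑ w : Fin n → α, g (a :: List.ofFn w) := by
  rw [← Fintype.sum_prod_type', ← (Fin.consEquiv fun _ => α).sum_comp]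
  simp [Fin.consEquiv, List.ofFn_succ]

def coordSum (p : ℤ × ℤ × ℤ) : ℤ := p.1 + p.2.1 + p.2.2

theorem sum_coordSum_foldl_step (n : ℕ) (p : ℤ × ℤ × ℤ) :
    ∑ v : Fin n → Bool, coordSum ((List.ofFn v).foldl step p) =
      3 ^ n * (p.1 + p.2.2) + 2 ^ n * p.2.1 := by
  induction n generalizing p with
  | zero => simp [coordSum, add_right_comm]
  | succ n ih =>
    rw [Fintype.sum_ofFn_succ (g := fun l => coordSum (l.foldl step p))]
    simp only [List.foldl_cons, ih, Fintype.sum_bool, step, f0, f1, ↓reduceIte, Bool.false_eq_true]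
    ring

theorem S_eq_two_pow_add_two_mul_three_pow (n : ℕ) : S n = 2 ^ n + 2 * 3 ^ n :=
  calc S n = ∑ v : Fin n → Bool, coordSum (delta (List.ofFn v)) := rfl
    _ = 3 ^ n * (1 + 1) + 2 ^ n * 1 := sum_coordSum_foldl_step n (1, 1, 1)
    _ = 2 ^ n + 2 * 3 ^ n := by ring

/-- For the TRIP-Stern sequence for `(e,12,e)`, the level sums are given by
`S(n) = 2ⁿ + 2·3ⁿ` for all `n ≥ 0`, and satisfy `S(n) = 5·S(n−1) − 6·S(n−2)`
for all `n ≥ 2`. -/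
theorem levelSum_closedForm_e12e :
    (∀ n : ℕ, S n = 2 ^ n + 2 * 3 ^ n) ∧
    (∀ n : ℕ, 2 ≤ n → S n = 5 * S (n - 1) - 6 * S (n - 2)) := by
  refine ⟨S_eq_two_pow_add_two_mul_three_pow, fun n hn => ?_⟩
  obtain ⟨m, rfl⟩ : ∃ m, n = m + 2 := ⟨n - 2, by omega⟩
  simp only [S_eq_two_pow_add_two_mul_three_pow, Nat.add_sub_cancel, show m + 2 - 1 = m + 1 from rfl]
  ring
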